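/- arXiv:2003.09449 — 2 statements merged into one kernel-verified Lean document; each statement's English description precedes it below -/
import Mathlib

section
/- For all natural numbers n ≥ 1 and k ≥ 1 there exists a natural number N (depending only on n and k) such that for every complex vector space X of dimension at least N and every n-homogeneous polynomial P : X → ℂ there exists a k-dimensional linear subspace H ⊆ X with P identically zero on H. -/
universe u

/-- `P : X → ℂ` is an `n`-homogeneous polynomial on the complex vector space `X`:
there is a symmetric `n`-linear form `A` with `P x = A (x, …, x)`. -/
def IsHomogPoly {X : Type u} [AddCommGroup X] [Module ℂ X] (n : ℕ) (P : X → ℂ) : Prop :=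
  ∃ A : MultilinearMap ℂ (fun _ : Fin n => X) ℂ,
    (∀ (σ : Equiv.Perm (Fin n)) (v : Fin n → X), (A fun i => v (σ i)) = A v) ∧
    ∀ x, P x = A fun _ => x

universe v

open Module Finset

/-!
Work with families of multilinear forms `A i` of arities `1 ≤ d i ≤ n`, not necessarily
symmetric, and induct on `n`, on the number `m` of forms and on `k`. All but one form vanish
on a plane by induction on `m`, and on that plane the last one has a zero `x ≠ 0` because the
field is algebraically closed. Expanding `A (c • x + y)` by multilinearity, `A` vanishes on
`K ∙ x ⊔ H` once it vanishes at `x` and on `H` and the partial evaluations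
`y ↦ A (s.piecewise y x)`, for nonempty proper `s`, vanish on `H`. These have smaller arity,
so by induction on `n` they vanish on a large subspace `W` of a hyperplane avoiding `x`, and
induction on `k` inside `W` gives `H`.
-/

namespace MultilinearMap

variable {R M N ι : Type*} [CommSemiring R] [AddCommMonoid M] [Module R M]
  [AddCommMonoid N] [Module R N] [Fintype ι] [DecidableEq ι]

theorem map_smul_add_const (f : MultilinearMap R (fun _ : ι => M) N) (c : R) (x y : M) :
    f (fun _ => c • x + y) =
      ∑ s : Finset ι, c ^ #s • f (s.piecewise (fun _ => x) fun _ => y) := by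
  rw [show (fun _ : ι => c • x + y) = (fun _ => c • x) + fun _ => y from rfl, f.map_add_univ]
  refine sum_congr rfl fun s _ => ?_
  rw [← prod_const, ← f.map_piecewise_smul]
  congr 1
  ext i
  by_cases hi : i ∈ s <;> simp [hi]

theorem map_smul_add_const_eq_zero (f : MultilinearMap R (fun _ : ι => M) N) {x y : M}
    (hx : f (fun _ => x) = 0) (hy : f (fun _ => y) = 0)
    (hxy : ∀ s : Finset ι, s.Nonempty → s ≠ univ → f (s.piecewise (fun _ => x) fun _ => y) = 0)
    (c : R) : f (fun _ => c • x + y) = 0 := by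
  rw [map_smul_add_const]
  refine sum_eq_zero fun s _ => ?_
  obtain rfl | hs := s.eq_empty_or_nonempty
  · simp [hy]
  obtain rfl | hsu := eq_or_ne s univ
  · simp [hx]
  · simp [hxy s hs hsu]

theorem restr_apply_const {n k : ℕ} (f : MultilinearMap R (fun _ : Fin n => M) N)
    (s : Finset (Fin n)) (hk : #s = k) (x z : M) :
    f.restr s hk z (fun _ => x) = f (s.piecewise (fun _ => x) fun _ => z) :=
  rfl

theorem exists_map_smul_add_const_eq_zero {K : Type*} [Field K] [IsAlgClosed K] [Module K M]
    [Nonempty ι] (f : MultilinearMap K (fun _ : ι => M) K) {x : M} (hx : f (fun _ => x) ≠ 0)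
    (y : M) : ∃ c : K, f (fun _ => c • x + y) = 0 := by
  open Polynomial in
  let p : K[X] := ∑ s : Finset ι, C (f (s.piecewise (fun _ => x) fun _ => y)) * X ^ #s
  have hp_eval (c : K) : p.eval c = f (fun _ => c • x + y) := by
    simp only [p, eval_finsetSum, eval_mul, eval_C, eval_pow, eval_X, map_smul_add_const,
      smul_eq_mul, mul_comm]
  have hp_coeff : p.coeff (Fintype.card ι) = f (fun _ => x) := by
    rw [finsetSum_coeff, sum_eq_single univ]
    · simp
    · intro s _ hs
      simp [coeff_C_mul, coeff_X_pow, Ne.symm (mt s.card_eq_iff_eq_univ.mp hs)]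
    · simp
  have hp_deg : p.degree ≠ 0 := by
    refine ne_of_gt (lt_of_lt_of_le ?_ (le_degree_of_ne_zero (hp_coeff ▸ hx)))
    exact_mod_cast Fintype.card_pos
  obtain ⟨c, hc⟩ := IsAlgClosed.exists_root p hp_deg
  exact ⟨c, hp_eval c ▸ hc⟩

end MultilinearMap

theorem Submodule.exists_ne_zero_map_const_eq_zero {K M ι : Type*} [Field K] [IsAlgClosed K]
    [AddCommGroup M] [Module K M] [Fintype ι] [Nonempty ι]
    (f : MultilinearMap K (fun _ : ι => M) K) (W : Submodule K M) (hW : 2 ≤ finrank K W) :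
    ∃ z ∈ W, z ≠ 0 ∧ f (fun _ => z) = 0 := by
  classical
  obtain ⟨v, hv⟩ := exists_linearIndependent_of_le_finrank hW
  by_cases h0 : f (fun _ => (v 0 : M)) = 0
  · exact ⟨v 0, (v 0).2, by simpa using hv.ne_zero 0, h0⟩
  obtain ⟨c, hc⟩ := f.exists_map_smul_add_const_eq_zero h0 (v 1)
  refine ⟨c • v 0 + v 1, W.add_mem (W.smul_mem c (v 0).2) (v 1).2, fun h => ?_, hc⟩
  have hsum : ∑ i, ![c, 1] i • v i = 0 := by
    simpa [Fin.sum_univ_two] using (Subtype.ext h : c • v 0 + v 1 = 0)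
  simpa using Fintype.linearIndependent_iff.mp hv ![c, 1] hsum 1

namespace Submodule

variable {K X : Type*} [Field K] [AddCommGroup X] [Module K X]

theorem exists_le_finrank_eq (V : Submodule K X) {k : ℕ} (hk : k ≤ finrank K V) :
    ∃ H ≤ V, finrank K H = k := by
  obtain ⟨v, hv⟩ := exists_linearIndependent_of_le_finrank hk
  refine ⟨(span K (Set.range v)).map V.subtype, map_subtype_le _ _, ?_⟩
  rw [finrank_map_subtype_eq, finrank_span_eq_card hv, Fintype.card_fin]

theorem finrank_le_finrank_inf_ker_add_one (V : Submodule K X) [FiniteDimensional K V]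
    (ℓ : Dual K X) : finrank K V ≤ finrank K ↥(V ⊓ LinearMap.ker ℓ) + 1 := by
  rw [← map_comap_subtype, finrank_map_subtype_eq, ← LinearMap.ker_domRestrict,
    ← LinearMap.finrank_range_add_finrank_ker (ℓ.domRestrict V), add_comm]
  gcongr
  simpa using (LinearMap.range (ℓ.domRestrict V)).finrank_le

theorem finrank_span_singleton_sup {H : Submodule K X} [FiniteDimensional K H] {x : X}
    (hx : x ∉ H) : finrank K ↥(K ∙ x ⊔ H) = finrank K H + 1 := by
  have := finrank_sup_add_finrank_inf_eq (K ∙ x) H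
  rw [(disjoint_span_singleton_of_notMem hx).symm.eq_bot, finrank_bot,
    finrank_span_singleton (ne_of_mem_of_not_mem H.zero_mem hx).symm] at this
  omega

end Submodule

section ZeroSubspaceBound

variable (K : Type v) [Field K]

def IsZeroSubspaceBound (n m k N : ℕ) : Prop :=
  ∀ (X : Type u) [AddCommGroup X] [Module K X] (V : Submodule K X), N ≤ finrank K V →
    ∀ (ι : Type) [Fintype ι] (d : ι → ℕ) (A : ∀ i, MultilinearMap K (fun _ : Fin (d i) => X) K),
      Fintype.card ι ≤ m → (∀ i, 0 < d i) → (∀ i, d i ≤ n) →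
      ∃ H ≤ V, finrank K H = k ∧ ∀ i, ∀ x ∈ H, A i (fun _ => x) = 0

theorem isZeroSubspaceBound_zero_right (n m : ℕ) : IsZeroSubspaceBound.{u} K n m 0 0 := by
  intro X _ _ V _ ι _ d A _ hd _
  refine ⟨⊥, bot_le, finrank_bot K X, fun i x hx => ?_⟩
  have : Nonempty (Fin (d i)) := ⟨⟨0, hd i⟩⟩
  rw [(Submodule.mem_bot K).mp hx]
  exact (A i).map_zero

theorem isZeroSubspaceBound_of_forall_isEmpty {n m : ℕ}
    (h : ∀ (ι : Type) [Fintype ι] (d : ι → ℕ), Fintype.card ι ≤ m → (∀ i, 0 < d i) →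
      (∀ i, d i ≤ n) → IsEmpty ι) (k : ℕ) :
    IsZeroSubspaceBound.{u} K n m k k := by
  intro X _ _ V hV ι _ d A hcard hd hdn
  have := h ι d hcard hd hdn
  obtain ⟨H, hHV, hH⟩ := V.exists_le_finrank_eq hV
  exact ⟨H, hHV, hH, isEmptyElim⟩

variable {K}

theorem IsZeroSubspaceBound.exists_ne_zero_forall_eq_zero [IsAlgClosed K] {n m N : ℕ}
    (h : IsZeroSubspaceBound.{u} K n m 2 N) {X : Type u} [AddCommGroup X] [Module K X]
    (V : Submodule K X) (hV : N ≤ finrank K V) {ι : Type} [Fintype ι] (d : ι → ℕ)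
    (A : ∀ i, MultilinearMap K (fun _ : Fin (d i) => X) K) (hcard : Fintype.card ι ≤ m + 1)
    (hd : ∀ i, 0 < d i) (hdn : ∀ i, d i ≤ n) :
    ∃ x ∈ V, x ≠ 0 ∧ ∀ i, A i (fun _ => x) = 0 := by
  classical
  rcases isEmpty_or_nonempty ι with hι | ⟨⟨i₀⟩⟩
  · obtain ⟨W, hWV, hW, -⟩ := h X V hV ι d A (by simp [Fintype.card_eq_zero]) hd hdn
    obtain ⟨x, hxW, hx0⟩ := W.exists_mem_ne_zero_of_ne_bot fun hbot => by subst hbot; simp at hW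
    exact ⟨x, hWV hxW, hx0, isEmptyElim⟩
  have hcard' : Fintype.card {i : ι // i ≠ i₀} ≤ m := by
    rw [Fintype.card_subtype_compl, Fintype.card_subtype_eq]
    omega
  obtain ⟨W, hWV, hW, hWA⟩ := h X V hV {i : ι // i ≠ i₀} (fun i => d i) (fun i => A i) hcard'
    (fun i => hd i) (fun i => hdn i)
  have : Nonempty (Fin (d i₀)) := ⟨⟨0, hd i₀⟩⟩
  obtain ⟨x, hxW, hx0, hx⟩ := W.exists_ne_zero_map_const_eq_zero (A i₀) (hW ▸ le_rfl)
  refine ⟨x, hWV hxW, hx0, fun i => ?_⟩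
  by_cases hi : i = i₀
  · exact hi ▸ hx
  · exact hWA ⟨i, hi⟩ x hxW

/-- Indexes the partial evaluations `y ↦ A i (s.piecewise y x)` of a family `A`. -/
abbrev PartialIndex {ι : Type} (d : ι → ℕ) : Type :=
  {p : Σ i, Finset (Fin (d i)) // p.2.Nonempty ∧ p.2 ≠ Finset.univ}

theorem card_partialIndex_le {ι : Type} [Fintype ι] {d : ι → ℕ} {n : ℕ} (hdn : ∀ i, d i ≤ n) :
    Fintype.card (PartialIndex d) ≤ Fintype.card ι * 2 ^ n :=
  calc Fintype.card (PartialIndex d)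
      ≤ Fintype.card (Σ i, Finset (Fin (d i))) := Fintype.card_subtype_le _
    _ = ∑ i, 2 ^ d i := by simp [Fintype.card_sigma, Fintype.card_finset]
    _ ≤ ∑ _i : ι, 2 ^ n := Finset.sum_le_sum fun i _ => Nat.pow_le_pow_right two_pos (hdn i)
    _ = Fintype.card ι * 2 ^ n := by simp

theorem IsZeroSubspaceBound.succ [IsAlgClosed K] {n m k N₀ N₁ N₂ : ℕ}
    (h₂ : IsZeroSubspaceBound.{u} K (n + 1) m 2 N₂)
    (hpart : IsZeroSubspaceBound.{u} K n ((m + 1) * 2 ^ (n + 1)) N₁ N₀)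
    (hk : IsZeroSubspaceBound.{u} K (n + 1) (m + 1) k N₁) :
    IsZeroSubspaceBound.{u} K (n + 1) (m + 1) (k + 1) (max N₂ (N₀ + 1)) := by
  intro X _ _ V hV ι _ d A hcard hd hdn
  obtain ⟨x, hxV, hx0, hxA⟩ :=
    h₂.exists_ne_zero_forall_eq_zero V (le_of_max_le_left hV) d A hcard hd hdn
  obtain ⟨ℓ, hℓ⟩ : ∃ ℓ : Dual K X, ℓ x ≠ 0 := by
    by_contra! h
    exact hx0 ((forall_dual_apply_eq_zero_iff K x).mp h)
  have : FiniteDimensional K V := Module.finite_of_finrank_pos (by omega)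
  have hVℓ := V.finrank_le_finrank_inf_ker_add_one ℓ
  obtain ⟨W, hWV, hW, hWA⟩ := hpart X (V ⊓ LinearMap.ker ℓ) (by omega) (PartialIndex d)
    (fun p => #p.1.2) (fun p => (A p.1.1).restr p.1.2 rfl x)
    ((card_partialIndex_le hdn).trans (Nat.mul_le_mul_right _ hcard))
    (fun p => p.2.1.card_pos)
    (fun p => Nat.le_of_lt_succ <|
      (by simpa using p.1.2.card_lt_iff_ne_univ.mpr p.2.2 : #p.1.2 < _).trans_le (hdn _))
  obtain ⟨H, hHW, hH, hHA⟩ := hk X W hW.ge ι d A hcard hd hdn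
  have hHV : H ≤ V := hHW.trans (hWV.trans inf_le_left)
  have hHℓ : H ≤ LinearMap.ker ℓ := hHW.trans (hWV.trans inf_le_right)
  have : FiniteDimensional K H := Submodule.finiteDimensional_of_le hHV
  refine ⟨K ∙ x ⊔ H, sup_le ((Submodule.span_singleton_le_iff_mem _ _).mpr hxV) hHV, ?_,
    fun i z hz => ?_⟩
  · rw [Submodule.finrank_span_singleton_sup fun hxH => hℓ (hHℓ hxH), hH]
  obtain ⟨_, hcx, y, hy, rfl⟩ := Submodule.mem_sup.mp hz
  obtain ⟨c, rfl⟩ := Submodule.mem_span_singleton.mp hcx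
  refine (A i).map_smul_add_const_eq_zero (hxA i) (hHA i y hy) (fun s hs hsu => ?_) c
  rw [← Finset.piecewise_compl, ← MultilinearMap.restr_apply_const _ _ rfl]
  have hsc : sᶜ.Nonempty := (compl_ne_univ_iff_nonempty sᶜ).mp (by rwa [compl_compl])
  exact hWA ⟨⟨i, sᶜ⟩, hsc, s.compl_ne_univ_iff_nonempty.mpr hs⟩ y (hHW hy)

variable (K) in
theorem exists_isZeroSubspaceBound [IsAlgClosed K] (n m k : ℕ) :
    ∃ N, IsZeroSubspaceBound.{u} K n m k N := by
  induction n generalizing m k with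
  | zero =>
    refine ⟨k, isZeroSubspaceBound_of_forall_isEmpty K (fun ι _ d _ hd hdn => ?_) k⟩
    exact ⟨fun i => (hd i).ne' (Nat.le_zero.mp (hdn i))⟩
  | succ n ihn =>
    induction m generalizing k with
    | zero =>
      refine ⟨k, isZeroSubspaceBound_of_forall_isEmpty K (fun ι _ d hcard _ _ => ?_) k⟩
      exact Fintype.card_eq_zero_iff.mp (Nat.le_zero.mp hcard)
    | succ m ihm =>
      induction k with
      | zero => exact ⟨0, isZeroSubspaceBound_zero_right K _ _⟩
      | succ k ihk =>
        obtain ⟨N₁, hk⟩ := ihk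
        obtain ⟨N₀, hpart⟩ := ihn ((m + 1) * 2 ^ (n + 1)) N₁
        obtain ⟨N₂, h₂⟩ := ihm 2
        exact ⟨_, h₂.succ hpart hk⟩

end ZeroSubspaceBound

theorem exists_dim_bound_zero_subspace_general (n k : ℕ) (hn : 1 ≤ n) :
    ∃ N : ℕ, ∀ (X : Type u) [AddCommGroup X] [Module ℂ X],
      (N : Cardinal.{u}) ≤ Module.rank ℂ X →
      ∀ P : X → ℂ, IsHomogPoly n P →
        ∃ H : Submodule ℂ X, Module.finrank ℂ H = k ∧ ∀ x ∈ H, P x = 0 := by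
  obtain ⟨N, hN⟩ := exists_isZeroSubspaceBound ℂ n 1 k
  refine ⟨N, fun X _ _ hX P ⟨A, _, hPA⟩ => ?_⟩
  obtain ⟨v, hv⟩ := exists_linearIndependent_of_le_rank hX
  obtain ⟨H, -, hH, hHA⟩ := hN X (Submodule.span ℂ (Set.range v))
    (by rw [finrank_span_eq_card hv, Fintype.card_fin]) Unit (fun _ => n) (fun _ => A) (by simp)
    (fun _ => hn) (fun _ => le_rfl)
  exact ⟨H, hH, fun x hx => (hPA x).trans (hHA () x hx)⟩

/-- For all `n ≥ 1` and `k ≥ 1` there is `N` such that on every complex vector space of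
dimension at least `N`, every `n`-homogeneous polynomial vanishes identically on some
`k`-dimensional subspace. -/
theorem exists_dim_bound_zero_subspace (n k : ℕ) (hn : 1 ≤ n) (hk : 1 ≤ k) :
    ∃ N : ℕ, ∀ (X : Type u) [AddCommGroup X] [Module ℂ X],
      (N : Cardinal.{u}) ≤ Module.rank ℂ X →
      ∀ P : X → ℂ, IsHomogPoly n P →
        ∃ H : Submodule ℂ X, Module.finrank ℂ H = k ∧ ∀ x ∈ H, P x = 0 :=
  exists_dim_bound_zero_subspace_general n k hn
end

section
/- For every natural number p ≥ 1, all degrees n₁, …, n_p ≥ 1, and every k ≥ 1, there exists a natural number N (depending only on n₁, …, n_p and k) such that for every complex vector space X of dimension at least N and all homogeneous polynomials P₁, …, P_p : X → ℂ, where P_j is n_j-homogeneous, there exists a k-dimensional linear subspace H ⊆ X with P_j identically zero on H for every j = 1, …, p. -/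
/-!
We work with multilinear forms instead of polynomials and prove by induction on the maximal
degree `d` the stronger statement that the forms vanish on *all* tuples of vectors from `H`.

Such a null subspace is built one basis vector at a time. Given independent `x₁, …, x_k` on
which all forms vanish, fill some but not all slots of each form with the `xᵢ`: this gives
boundedly many forms of degree `≤ d`, which by induction have a large common null subspace `W`
inside a complement of `span {xᵢ}`. A common nonzero diagonal zero `z ∈ W` of the original forms
then extends the family: a tuple from `x₁, …, x_k, z` uses only the `xᵢ`, only `z`, or both.

Common diagonal zeros of `p₁ + p₂` forms are found in a null subspace of the first `p₁` forms
large enough to contain a common zero of the others; for a single form `A` they come from a root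
of the polynomial `t ↦ A (u + t v, …, u + t v)`, whose leading coefficient is `A (v, …, v)`.
-/

universe u

open Polynomial Module Submodule Set

theorem Fin.snoc_of_ne_last {α : Type*} {k : ℕ} (x : Fin k → α) (z : α) {a : Fin (k + 1)}
    (h : a ≠ Fin.last k) : Fin.snoc (α := fun _ => α) x z a = x (a.castPred h) := by
  obtain ⟨b, rfl⟩ := Fin.exists_castSucc_eq.mpr h
  simp

namespace Submodule

variable {K X : Type*} [Field K] [AddCommGroup X] [Module K X]

theorem exists_linearIndependent_fin_of_le_rank (V : Submodule K X) {k : ℕ}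
    (h : (k : Cardinal) ≤ Module.rank K V) :
    ∃ x : Fin k → X, (∀ i, x i ∈ V) ∧ LinearIndependent K x := by
  obtain ⟨s, hs, hind⟩ := le_rank_iff_exists_linearIndependent_finset.mp h
  let e : Fin k ≃ (s : Set V) := (Fintype.equivFinOfCardEq (by simpa using hs)).symm
  exact ⟨fun i => (e i : V), fun i => (e i : V).2,
    (hind.comp e e.injective).map' V.subtype V.ker_subtype⟩

theorem _root_.LinearIndependent.rank_span_range_fin {k : ℕ} {x : Fin k → X}
    (hx : LinearIndependent K x) : Module.rank K (span K (range x)) = k := by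
  rw [rank_span hx, ← Cardinal.lift_uzero (Cardinal.mk (range x)),
    Cardinal.mk_range_eq_of_injective hx.injective]
  simp

theorem exists_le_disjoint_le_rank {S V : Submodule K X} (hSV : S ≤ V) {k n : ℕ}
    (hS : Module.rank K S = k) (hV : ((n + k : ℕ) : Cardinal) ≤ Module.rank K V) :
    ∃ W ≤ V, Disjoint S W ∧ (n : Cardinal) ≤ Module.rank K W := by
  obtain ⟨C, hC⟩ := S.exists_isCompl
  have hdisj : Disjoint S (C ⊓ V) := hC.disjoint.mono_right inf_le_left
  refine ⟨C ⊓ V, inf_le_right, hdisj, ?_⟩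
  have hsup : S ⊔ C ⊓ V = V := by rw [← sup_inf_assoc_of_le C hSV, hC.sup_eq_top, top_inf_eq]
  have hrank := rank_sup_add_rank_inf_eq S (C ⊓ V)
  rw [hsup, hdisj.eq_bot, rank_bot, add_zero, hS, add_comm] at hrank
  rw [← Cardinal.add_nat_le_add_nat_iff k, ← hrank]
  exact_mod_cast hV

end Submodule

namespace MultilinearMap

section DiagPolynomial

variable {R M ι : Type*} [CommSemiring R] [AddCommMonoid M] [Module R M] [Fintype ι]
  [DecidableEq ι] (A : MultilinearMap R (fun _ : ι => M) R) (u v : M)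

noncomputable def diagPolynomial : R[X] :=
  ∑ S : Finset ι, C (A (S.piecewise (fun _ => v) (fun _ => u))) * X ^ S.card

theorem eval_diagPolynomial (t : R) : (A.diagPolynomial u v).eval t = A fun _ => u + t • v := by
  have hsplit : (fun _ : ι => u + t • v) = (fun _ => t • v) + fun _ => u :=
    funext fun _ => add_comm _ _
  rw [hsplit, A.map_add_univ, diagPolynomial, eval_finsetSum]
  refine Finset.sum_congr rfl fun S _ => ?_
  have hsmul : S.piecewise (fun _ => t • v) (fun _ => u) =
      S.piecewise (fun i => t • S.piecewise (fun _ => v) (fun _ => u) i)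
        (S.piecewise (fun _ => v) (fun _ => u)) := by
    ext i
    by_cases hi : i ∈ S <;> simp [hi]
  rw [hsmul, A.map_piecewise_smul]
  simp only [Finset.prod_const, smul_eq_mul, eval_mul, eval_C, eval_pow, eval_X]
  ring

theorem coeff_card_diagPolynomial :
    (A.diagPolynomial u v).coeff (Fintype.card ι) = A fun _ => v := by
  rw [diagPolynomial, finsetSum_coeff, Finset.sum_eq_single Finset.univ]
  · simp
  · intro S _ hS
    have : S.card ≠ Fintype.card ι := fun h => hS (Finset.card_eq_iff_eq_univ S |>.mp h)
    simp [coeff_X_pow, this.symm]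
  · simp

end DiagPolynomial

theorem map_eq_zero_of_forall_mem_span_range {R M N ι κ : Type*} [CommSemiring R]
    [AddCommMonoid M] [Module R M] [AddCommMonoid N] [Module R N] [Fintype ι] [Fintype κ]
    (A : MultilinearMap R (fun _ : ι => M) N) {x : κ → M}
    (hx : ∀ g : ι → κ, A (x ∘ g) = 0) {v : ι → M} (hv : ∀ i, v i ∈ span R (Set.range x)) : A v = 0 := by
  classical
  choose c hc using fun i => (mem_span_range_iff_exists_fun R).mp (hv i)
  rw [show v = fun i => ∑ a, c i a • x a from funext fun i => (hc i).symm, A.map_sum]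
  refine Finset.sum_eq_zero fun g _ => ?_
  rw [A.map_smul_univ, show (fun i => x (g i)) = x ∘ g from rfl, hx, smul_zero]

theorem exists_mem_ne_zero_diag_eq_zero {K X ι : Type*} [Field K] [IsAlgClosed K]
    [AddCommGroup X] [Module K X] [Fintype ι] [Nonempty ι]
    (A : MultilinearMap K (fun _ : ι => X) K) {V : Submodule K X} (hV : 2 ≤ Module.rank K V) :
    ∃ x ∈ V, x ≠ 0 ∧ A (fun _ => x) = 0 := by
  classical
  obtain ⟨w, hwV, hw⟩ :=
    V.exists_linearIndependent_fin_of_le_rank (k := 2) (by exact_mod_cast hV)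
  by_cases hv : A (fun _ => w 1) = 0
  · exact ⟨w 1, hwV 1, hw.ne_zero 1, hv⟩
  have hdeg : (A.diagPolynomial (w 0) (w 1)).degree ≠ 0 := fun h0 => by
    have := le_natDegree_of_ne_zero (A.coeff_card_diagPolynomial (w 0) (w 1) ▸ hv)
    rw [natDegree_eq_of_degree_eq_some h0] at this
    exact Fintype.card_ne_zero (Nat.le_zero.mp this)
  obtain ⟨t, ht⟩ := IsAlgClosed.exists_root _ hdeg
  refine ⟨w 0 + t • w 1, V.add_mem (hwV 0) (V.smul_mem t (hwV 1)), fun h0 => ?_,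
    by rw [← A.eval_diagPolynomial]; exact ht⟩
  have hw01 : ![w 0, w 1] = w := by ext i; fin_cases i <;> rfl
  rw [← hw01, LinearIndependent.pair_iff] at hw
  exact one_ne_zero (hw 1 t (by rwa [one_smul])).1

section MixedForm

variable {R M N ι : Type*} [CommSemiring R] [AddCommMonoid M] [Module R M] [AddCommMonoid N]
  [Module R N]

/-- Index `last k` stands for a vector still to be chosen: those slots stay free, and every other
slot `i` is filled with `x (g i)`. -/
def mixedForm (A : MultilinearMap R (fun _ : ι => M) N) {k : ℕ}
    (x : Fin k → M) (g : ι → Fin (k + 1)) :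
    MultilinearMap R (fun _ : {i // g i = Fin.last k} => M) N :=
  A.domDomRestrict (fun i => g i = Fin.last k) fun i => x ((g i).castPred i.2)

theorem mixedForm_apply_const (A : MultilinearMap R (fun _ : ι => M) N) {k : ℕ} (x : Fin k → M)
    (g : ι → Fin (k + 1)) (z : M) :
    A.mixedForm x g (fun _ => z) = A (Fin.snoc x z ∘ g) := by
  rw [mixedForm, domDomRestrict_apply]
  congr 1
  funext i
  split_ifs with h
  · simp [h]
  · exact (Fin.snoc_of_ne_last x z h).symm

end MixedForm

end MultilinearMap

section Bounds

variable (K : Type*) [Field K]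

def CommonNullSubspaceBound (d p k N : ℕ) : Prop :=
  ∀ (X : Type u) [AddCommGroup X] [Module K X] (V : Submodule K X),
    (N : Cardinal) ≤ Module.rank K V →
    ∀ (J : Type) [Fintype J], Fintype.card J ≤ p →
    ∀ (ι : J → Type) [∀ j, Fintype (ι j)] [∀ j, Nonempty (ι j)],
      (∀ j, Fintype.card (ι j) ≤ d) →
    ∀ A : ∀ j, MultilinearMap K (fun _ : ι j => X) K,
      ∃ H ≤ V, Module.rank K H = k ∧ ∀ j (v : ι j → X), (∀ i, v i ∈ H) → A j v = 0

def CommonZeroBound (d p N : ℕ) : Prop :=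
  ∀ (X : Type u) [AddCommGroup X] [Module K X] (V : Submodule K X),
    (N : Cardinal) ≤ Module.rank K V →
    ∀ (J : Type) [Fintype J], Fintype.card J ≤ p →
    ∀ (ι : J → Type) [∀ j, Fintype (ι j)] [∀ j, Nonempty (ι j)],
      (∀ j, Fintype.card (ι j) ≤ d) →
    ∀ A : ∀ j, MultilinearMap K (fun _ : ι j => X) K,
      ∃ x ∈ V, x ≠ 0 ∧ ∀ j, A j (fun _ => x) = 0

theorem commonNullSubspaceBound_zero_degree (p k : ℕ) :
    CommonNullSubspaceBound.{u} K 0 p k k := by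
  intro X _ _ V hV J _ _ ι _ _ hι A
  obtain ⟨x, hxV, hx⟩ := V.exists_linearIndependent_fin_of_le_rank hV
  refine ⟨span K (range x), span_le.mpr (range_subset_iff.mpr hxV), hx.rank_span_range_fin,
    fun j => ?_⟩
  exact absurd (hι j) (Fintype.card_ne_zero ∘ Nat.le_zero.mp)

theorem commonZeroBound_zero_forms (d : ℕ) : CommonZeroBound.{u} K d 0 1 := by
  intro X _ _ V hV J _ hJ ι _ _ _ A
  obtain ⟨x, hxV, hx⟩ := V.exists_linearIndependent_fin_of_le_rank (by exact_mod_cast hV)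
  have : IsEmpty J := Fintype.card_eq_zero_iff.mp (Nat.le_zero.mp hJ)
  exact ⟨x 0, hxV 0, hx.ne_zero 0, isEmptyElim⟩

theorem commonZeroBound_one_form [IsAlgClosed K] (d : ℕ) : CommonZeroBound.{u} K d 1 2 := by
  intro X _ _ V hV J _ hJ ι _ _ _ A
  have : Subsingleton J := Fintype.card_le_one_iff_subsingleton.mp hJ
  rcases isEmpty_or_nonempty J with hJ₀ | ⟨⟨j₀⟩⟩
  · obtain ⟨x, hxV, hx⟩ := V.exists_linearIndependent_fin_of_le_rank (k := 1)
      (le_trans (by norm_num) hV)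
    exact ⟨x 0, hxV 0, hx.ne_zero 0, isEmptyElim⟩
  · obtain ⟨x, hxV, hx0, hAx⟩ :=
      (A j₀).exists_mem_ne_zero_diag_eq_zero (by exact_mod_cast hV)
    exact ⟨x, hxV, hx0, fun j => Subsingleton.elim j₀ j ▸ hAx⟩

variable {K}

theorem CommonZeroBound.add {d p₁ p₂ N M : ℕ}
    (hnull : CommonNullSubspaceBound.{u} K d p₁ N M)
    (hzero : CommonZeroBound.{u} K d p₂ N) : CommonZeroBound.{u} K d (p₁ + p₂) M := by
  classical
  intro X _ _ V hV J _ hJ ι _ _ hι A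
  obtain ⟨s, -, hs⟩ := Finset.exists_subset_card_eq (s := (Finset.univ : Finset J))
    (n := min p₁ (Fintype.card J)) (by simp)
  obtain ⟨H, hHV, hH, hAH⟩ := hnull X V hV {j // j ∈ s} (by simp [hs])
    (fun j => ι j) (fun j => hι j) (fun j => A j)
  obtain ⟨x, hxH, hx0, hAx⟩ := hzero X H hH.ge {j // j ∉ s}
    (by rw [Fintype.card_subtype_compl, Fintype.card_coe, hs]; omega)
    (fun j => ι j) (fun j => hι j) (fun j => A j)
  refine ⟨x, hHV hxH, hx0, fun j => ?_⟩
  by_cases hj : j ∈ s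
  · exact hAH ⟨j, hj⟩ _ fun _ => hxH
  · exact hAx ⟨j, hj⟩

end Bounds

section Step

variable {K : Type*} [Field K] {X : Type u} [AddCommGroup X] [Module K X]
  {J : Type} [Fintype J] {ι : J → Type} [∀ j, Fintype (ι j)]
  (A : ∀ j, MultilinearMap K (fun _ : ι j => X) K)

theorem exists_le_forall_snoc_comp_eq_zero {d p k n N : ℕ}
    (hN : CommonNullSubspaceBound.{u} K d (p * (k + 1) ^ (d + 1)) n N)
    (hJ : Fintype.card J ≤ p) (hι : ∀ j, Fintype.card (ι j) ≤ d + 1) {x : Fin k → X}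
    (hA : ∀ j (g : ι j → Fin k), A j (x ∘ g) = 0) {W₀ : Submodule K X}
    (hW₀ : (N : Cardinal) ≤ Module.rank K W₀) :
    ∃ W ≤ W₀, Module.rank K W = n ∧ ∀ z ∈ W, ∀ j (g : ι j → Fin (k + 1)),
      (∃ i, g i ≠ Fin.last k) → A j (Fin.snoc x z ∘ g) = 0 := by
  classical
  let J' :=
    Σ j, {g : ι j → Fin (k + 1) // (∃ i, g i = Fin.last k) ∧ ∃ i, g i ≠ Fin.last k}
  have hJ' : Fintype.card J' ≤ p * (k + 1) ^ (d + 1) := by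
    rw [Fintype.card_sigma]
    calc ∑ j, Fintype.card {g : ι j → Fin (k + 1) // _}
        ≤ ∑ _j : J, (k + 1) ^ (d + 1) := Finset.sum_le_sum fun j _ => by
          grw [Fintype.card_subtype_le, Fintype.card_fun, Fintype.card_fin, hι j]
          omega
      _ ≤ p * (k + 1) ^ (d + 1) := by
          rw [Finset.sum_const, Finset.card_univ, smul_eq_mul]
          exact Nat.mul_le_mul_right _ hJ
  have : ∀ m : J', Nonempty {i // m.2.1 i = Fin.last k} :=
    fun m => m.2.2.1.elim fun i hi => ⟨⟨i, hi⟩⟩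
  obtain ⟨W, hWW₀, hW, hAW⟩ := hN X W₀ hW₀ J' hJ' (fun m => {i // m.2.1 i = Fin.last k})
    (fun m => m.2.2.2.elim fun i hi => Nat.le_of_lt_succ
      ((Fintype.card_subtype_lt (p := fun i => m.2.1 i = Fin.last k) hi).trans_le (hι m.1)))
    (fun m => (A m.1).mixedForm x m.2.1)
  refine ⟨W, hWW₀, hW, fun z hz j g hg => ?_⟩
  by_cases hlast : ∃ i, g i = Fin.last k
  · rw [← (A j).mixedForm_apply_const]
    exact hAW ⟨j, g, hlast, hg⟩ _ fun _ => hz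
  · push Not at hlast
    have hx : Fin.snoc x z ∘ g = x ∘ fun i => (g i).castPred (hlast i) :=
      funext fun i => Fin.snoc_of_ne_last x z (hlast i)
    rw [hx]
    exact hA j _

theorem exists_snoc_linearIndependent_forall_comp_eq_zero {d p k n N : ℕ}
    (hN : CommonNullSubspaceBound.{u} K d (p * (k + 1) ^ (d + 1)) n N)
    (hz : CommonZeroBound.{u} K (d + 1) p n) (hJ : Fintype.card J ≤ p)
    [∀ j, Nonempty (ι j)] (hι : ∀ j, Fintype.card (ι j) ≤ d + 1) {V : Submodule K X}
    {x : Fin k → X} (hxV : ∀ i, x i ∈ V) (hx : LinearIndependent K x)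
    (hA : ∀ j (g : ι j → Fin k), A j (x ∘ g) = 0)
    (hV : ((N + k : ℕ) : Cardinal) ≤ Module.rank K V) :
    ∃ z ∈ V, LinearIndependent K (Fin.snoc x z) ∧
      ∀ j (g : ι j → Fin (k + 1)), A j (Fin.snoc x z ∘ g) = 0 := by
  obtain ⟨W₀, hW₀V, hdisj, hW₀⟩ := exists_le_disjoint_le_rank
    (span_le.mpr (range_subset_iff.mpr hxV)) hx.rank_span_range_fin hV
  obtain ⟨W, hWW₀, hW, hAW⟩ := exists_le_forall_snoc_comp_eq_zero A hN hJ hι hA hW₀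
  obtain ⟨z, hzW, hz0, hAz⟩ := hz X W hW.ge J hJ ι hι A
  refine ⟨z, hW₀V (hWW₀ hzW), linearIndependent_finSnoc.mpr ⟨hx, fun hzS => hz0 ?_⟩,
    fun j g => ?_⟩
  · exact disjoint_def.mp hdisj z hzS (hWW₀ hzW)
  by_cases hg : ∃ i, g i ≠ Fin.last k
  · exact hAW z hzW j g hg
  · push Not at hg
    have hsnoc : Fin.snoc x z ∘ g = fun _ => z := funext fun i => by simp [hg i]
    rw [hsnoc]
    exact hAz j

theorem exists_linearIndependent_forall_comp_eq_zero {d p n : ℕ} (N : ℕ → ℕ)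
    (hN : ∀ k, CommonNullSubspaceBound.{u} K d (p * (k + 1) ^ (d + 1)) n (N k))
    (hz : CommonZeroBound.{u} K (d + 1) p n) (hJ : Fintype.card J ≤ p)
    [∀ j, Nonempty (ι j)] (hι : ∀ j, Fintype.card (ι j) ≤ d + 1) {V : Submodule K X} :
    ∀ k, ((∑ i ∈ Finset.range k, (N i + i) : ℕ) : Cardinal) ≤ Module.rank K V →
      ∃ x : Fin k → X, (∀ i, x i ∈ V) ∧ LinearIndependent K x ∧
        ∀ j (g : ι j → Fin k), A j (x ∘ g) = 0
  | 0, _ => ⟨Fin.elim0, fun i => i.elim0, linearIndependent_empty_type,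
      fun j g => (g (Classical.arbitrary _)).elim0⟩
  | k + 1, hV => by
    rw [Finset.sum_range_succ, Nat.cast_add] at hV
    obtain ⟨x, hxV, hx, hA⟩ := exists_linearIndependent_forall_comp_eq_zero N hN hz hJ hι k
      (le_self_add.trans hV)
    obtain ⟨z, hzV, hxz, hAz⟩ := exists_snoc_linearIndependent_forall_comp_eq_zero A (hN k) hz
      hJ hι hxV hx hA (le_add_self.trans hV)
    exact ⟨Fin.snoc x z, Fin.lastCases (by simpa using hzV) (by simpa using hxV), hxz, hAz⟩

end Step

theorem CommonNullSubspaceBound.exists_succ {K : Type*} [Field K] {d p : ℕ}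
    (hN : ∀ p' n, ∃ N, CommonNullSubspaceBound.{u} K d p' n N)
    (hz : ∃ N, CommonZeroBound.{u} K (d + 1) p N) (k : ℕ) :
    ∃ N, CommonNullSubspaceBound.{u} K (d + 1) p k N := by
  obtain ⟨n, hz⟩ := hz
  choose N hN using fun i => hN (p * (i + 1) ^ (d + 1)) n
  refine ⟨∑ i ∈ Finset.range k, (N i + i), fun X _ _ V hV J _ hJ ι _ _ hι A => ?_⟩
  obtain ⟨x, hxV, hx, hA⟩ := exists_linearIndependent_forall_comp_eq_zero A N hN hz hJ hι k hV
  exact ⟨span K (range x), span_le.mpr (range_subset_iff.mpr hxV), hx.rank_span_range_fin,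
    fun j v hv => (A j).map_eq_zero_of_forall_mem_span_range (hA j) hv⟩

theorem CommonNullSubspaceBound.exists (K : Type*) [Field K] [IsAlgClosed K] (d p k : ℕ) :
    ∃ N, CommonNullSubspaceBound.{u} K d p k N := by
  induction d generalizing p k with
  | zero => exact ⟨k, commonNullSubspaceBound_zero_degree K p k⟩
  | succ d ih =>
    have hnull₁ : ∀ k, ∃ N, CommonNullSubspaceBound.{u} K (d + 1) 1 k N :=
      exists_succ ih ⟨2, commonZeroBound_one_form K (d + 1)⟩
    have hzero : ∀ p, ∃ N, CommonZeroBound.{u} K (d + 1) p N := by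
      intro p
      induction p with
      | zero => exact ⟨1, commonZeroBound_zero_forms K (d + 1)⟩
      | succ p ihp =>
        obtain ⟨N, hN⟩ := ihp
        obtain ⟨M, hM⟩ := hnull₁ N
        exact ⟨M, add_comm 1 p ▸ CommonZeroBound.add hM hN⟩
    exact exists_succ ih (hzero p) k

theorem exists_dim_bound_common_zero_subspace_general (p : ℕ) (deg : Fin p → ℕ)
    (hdeg : ∀ j, 1 ≤ deg j) (k : ℕ) :
    ∃ N : ℕ, ∀ (X : Type u) [AddCommGroup X] [Module ℂ X],
      (N : Cardinal.{u}) ≤ Module.rank ℂ X →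
      ∀ P : Fin p → X → ℂ, (∀ j, IsHomogPoly (deg j) (P j)) →
        ∃ H : Submodule ℂ X, Module.finrank ℂ H = k ∧ ∀ j, ∀ x ∈ H, P j x = 0 := by
  obtain ⟨N, hN⟩ := CommonNullSubspaceBound.exists ℂ (Finset.univ.sup deg) p k
  refine ⟨N, fun X _ _ hX P hP => ?_⟩
  choose A hA using fun j => (hP j).imp fun _ hA => hA.2
  have : ∀ j, Nonempty (Fin (deg j)) := fun j => ⟨⟨0, hdeg j⟩⟩
  obtain ⟨H, -, hH, hAH⟩ := hN X ⊤ (by rwa [rank_top]) (Fin p) (by simp)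
    (fun j => Fin (deg j))
    (fun j => by simpa using Finset.le_sup (Finset.mem_univ j)) A
  exact ⟨H, finrank_eq_of_rank_eq hH, fun j x hx => (hA j x).trans (hAH j _ fun _ => hx)⟩

/-- For all degrees `n₁, …, n_p ≥ 1` and every `k ≥ 1` there is `N` such that on every
complex vector space of dimension at least `N`, any family of homogeneous polynomials
`P₁, …, P_p` (with `P_j` being `n_j`-homogeneous) vanishes simultaneously on some
`k`-dimensional subspace. -/
theorem exists_dim_bound_common_zero_subspace (p : ℕ) (hp : 1 ≤ p) (deg : Fin p → ℕ)
    (hdeg : ∀ j, 1 ≤ deg j) (k : ℕ) (hk : 1 ≤ k) :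
    ∃ N : ℕ, ∀ (X : Type u) [AddCommGroup X] [Module ℂ X],
      (N : Cardinal.{u}) ≤ Module.rank ℂ X →
      ∀ P : Fin p → X → ℂ, (∀ j, IsHomogPoly (deg j) (P j)) →
        ∃ H : Submodule ℂ X, Module.finrank ℂ H = k ∧ ∀ j, ∀ x ∈ H, P j x = 0 :=
  exists_dim_bound_common_zero_subspace_general p deg hdeg k
end
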